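/- arXiv:1110.6305 — 3 statements merged into one kernel-verified Lean document; each statement's English description precedes it below -/
import Mathlib

section
/- Let H be a Hilbert space and u, v partial isometries on H satisfying u v u = u and v u v = v. Then v = u*. -/
open scoped InnerProductSpace

/-!
The products `v * u` and `u * v` are idempotent (from `u v u = u` and `v u v = v`) and, being
products of partial isometries, have norm at most one. In a Hilbert space a contractive idempotent
is an orthogonal projection: for `x` in its range and `y` in its kernel, `x` is the point of minimal
norm on the line `x + ℂ y`, so `x ⟂ y`. Once `u v` and `v u` are self-adjoint, `v` is a
Moore–Penrose inverse of `u`, and for a partial isometry that inverse is `u*`.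
-/

theorem eq_star_of_isSelfAdjoint_mul {R : Type*} [Monoid R] [StarMul R] {a b : R}
    (ha : a * star a * a = a) (haba : a * b * a = a) (hbab : b * a * b = b)
    (hab : IsSelfAdjoint (a * b)) (hba : IsSelfAdjoint (b * a)) : b = star a := by
  have hba_eq : b * a = star a * a :=
    calc b * a = b * (a * star a * a) := by rw [ha]
      _ = star (star a * a * (b * a)) := by
        rw [star_mul, hba.star_eq, star_mul, star_star]; simp only [mul_assoc]
      _ = star (star a * (a * b * a)) := by simp only [mul_assoc]
      _ = star a * a := by rw [haba, star_mul, star_star]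
  have hab_eq : a * b = a * star a :=
    calc a * b = a * star a * a * b := by rw [ha]
      _ = star (a * b * (a * star a)) := by
        rw [star_mul, hab.star_eq, star_mul, star_star]; simp only [mul_assoc]
      _ = star (a * b * a * star a) := by simp only [mul_assoc]
      _ = a * star a := by rw [haba, star_mul, star_star]
  have hstar : star a * a * star a = star a := by
    simpa only [star_mul, star_star, mul_assoc] using congrArg star ha
  calc b = b * a * b := hbab.symm
    _ = star a * (a * b) := by rw [hba_eq, mul_assoc]
    _ = star a := by rw [hab_eq, ← mul_assoc, hstar]

theorem norm_le_one_of_mul_star_mul_self {A : Type*} [NonUnitalNormedRing A] [StarRing A]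
    [CStarRing A] {a : A} (ha : a * star a * a = a) : ‖a‖ ≤ 1 := by
  have hproj : IsStarProjection (star a * a) :=
    ⟨by rw [IsIdempotentElem, mul_assoc, ← mul_assoc a, ha],
      by rw [IsSelfAdjoint, star_mul, star_star]⟩
  rw [← abs_norm, abs_le_one_iff_mul_self_le_one, ← CStarRing.norm_star_mul_self]
  exact hproj.norm_le

section InnerProductSpace

variable {𝕜 E : Type*} [RCLike 𝕜] [NormedAddCommGroup E] [InnerProductSpace 𝕜 E]

theorem inner_eq_zero_of_forall_norm_le_norm_add_smul {x y : E}
    (h : ∀ c : 𝕜, ‖x‖ ≤ ‖x + c • y‖) : ⟪x, y⟫_𝕜 = 0 := by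
  have hmin : ‖x - 0‖ = ⨅ w : (𝕜 ∙ y), ‖x - w‖ := by
    refine le_antisymm (le_ciInf fun w => ?_) ?_
    · obtain ⟨c, hc⟩ := Submodule.mem_span_singleton.mp w.2
      rw [sub_zero, ← hc, sub_eq_add_neg, ← neg_smul]
      exact h (-c)
    · exact ciInf_le_of_le ⟨0, by rintro _ ⟨w, rfl⟩; positivity⟩ 0 (by simp)
  simpa using (Submodule.norm_eq_iInf_iff_inner_eq_zero (𝕜 ∙ y) (zero_mem _)).mp hmin y
    (Submodule.mem_span_singleton_self y)

namespace ContinuousLinearMap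

theorem isOrtho_range_ker_of_norm_le_one {e : E →L[𝕜] E} (he : IsIdempotentElem e)
    (hn : ‖e‖ ≤ 1) : LinearMap.range (e : E →ₗ[𝕜] E) ⟂ LinearMap.ker (e : E →ₗ[𝕜] E) := by
  rw [Submodule.isOrtho_iff_inner_eq]
  rintro _ ⟨x, rfl⟩ y (hy : e y = 0)
  refine inner_eq_zero_of_forall_norm_le_norm_add_smul fun c => ?_
  have hex : e (e x + c • y) = e x := by
    rw [map_add, map_smul, hy, smul_zero, add_zero]
    exact DFunLike.congr_fun he.eq x
  calc ‖e x‖ = ‖e (e x + c • y)‖ := by rw [hex]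
    _ ≤ ‖e‖ * ‖e x + c • y‖ := e.le_opNorm _
    _ ≤ ‖e x + c • y‖ := mul_le_of_le_one_left (norm_nonneg _) hn

variable [CompleteSpace E]

theorem isSelfAdjoint_of_isIdempotentElem_of_norm_le_one {e : E →L[𝕜] E}
    (he : IsIdempotentElem e) (hn : ‖e‖ ≤ 1) : IsSelfAdjoint e :=
  isSelfAdjoint_iff_isSymmetric.mpr <|
    (LinearMap.IsIdempotentElem.isSymmetric_iff_isOrtho_range_ker (IsIdempotentElem.toLinearMap he)).mpr <|
      isOrtho_range_ker_of_norm_le_one he hn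

theorem isSelfAdjoint_mul_of_mul_mul_eq {a b : E →L[𝕜] E} (ha : a * star a * a = a)
    (hb : b * star b * b = b) (haba : a * b * a = a) : IsSelfAdjoint (b * a) := by
  refine isSelfAdjoint_of_isIdempotentElem_of_norm_le_one ?_ ?_
  · rw [IsIdempotentElem, mul_assoc, ← mul_assoc a, haba]
  · calc ‖b * a‖ ≤ ‖b‖ * ‖a‖ := norm_mul_le _ _
      _ ≤ 1 := mul_le_one₀ (norm_le_one_of_mul_star_mul_self hb) (norm_nonneg _)
          (norm_le_one_of_mul_star_mul_self ha)

end ContinuousLinearMap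

end InnerProductSpace

/-- If `u`, `v` are partial isometries on a Hilbert space with `u v u = u` and
`v u v = v`, then `v = u*`. -/
theorem stmt_1 {H : Type*} [NormedAddCommGroup H] [InnerProductSpace ℂ H] [CompleteSpace H]
    (u v : H →L[ℂ] H)
    (hu : u * star u * u = u) (hv : v * star v * v = v)
    (huvu : u * v * u = u) (hvuv : v * u * v = v) :
    v = star u :=
  eq_star_of_isSelfAdjoint_mul hu huvu hvuv
    (ContinuousLinearMap.isSelfAdjoint_mul_of_mul_mul_eq hv hu hvuv)
    (ContinuousLinearMap.isSelfAdjoint_mul_of_mul_mul_eq hu hv huvu)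
end

section
/- Let u be a power partial isometry on a Hilbert space, and set p_k := u*^k u^k, q_l := u^l u*^l for k, l ≥ 1. Then p_k p_l = p_{max(k,l)} and q_k q_l = q_{max(k,l)}. -/
/-!
If `uᵏ` is a partial isometry then so is `u*ᵏ`, i.e. `u*ᵏ uᵏ u*ᵏ = u*ᵏ`. For `k ≤ l` write
`u*ˡ = u*ᵏ u*ˡ⁻ᵏ` and `uˡ = uˡ⁻ᵏ uᵏ`: the factor `u*ᵏ uᵏ` is then absorbed on either side of
`u*ˡ uˡ`, so `p_k p_l = p_l p_k = p_l`. Applying this to `u*` gives the statement for the `q_l`.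
-/

namespace PowerPartialIsometry

variable {M : Type*} [Monoid M] [StarMul M] {u : M} {k l : ℕ}

lemma star_pow_mul_pow_mul_star_pow (hk : u ^ k * star u ^ k * u ^ k = u ^ k) :
    star u ^ k * u ^ k * star u ^ k = star u ^ k := by
  simpa only [star_mul, star_pow, star_star, mul_assoc] using congrArg star hk

lemma initialProj_mul_initialProj_of_le (hk : u ^ k * star u ^ k * u ^ k = u ^ k) (hkl : k ≤ l) :
    (star u ^ k * u ^ k) * (star u ^ l * u ^ l) = star u ^ l * u ^ l := by
  obtain ⟨m, rfl⟩ := Nat.exists_eq_add_of_le hkl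
  calc (star u ^ k * u ^ k) * (star u ^ (k + m) * u ^ (k + m))
      = (star u ^ k * u ^ k * star u ^ k) * (star u ^ m * u ^ (k + m)) := by
        simp only [pow_add, mul_assoc]
    _ = star u ^ (k + m) * u ^ (k + m) := by
        rw [star_pow_mul_pow_mul_star_pow hk, pow_add (star u), mul_assoc]

lemma initialProj_mul_initialProj_of_ge (hl : u ^ l * star u ^ l * u ^ l = u ^ l) (hlk : l ≤ k) :
    (star u ^ k * u ^ k) * (star u ^ l * u ^ l) = star u ^ k * u ^ k := by
  obtain ⟨m, rfl⟩ := Nat.exists_eq_add_of_le hlk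
  calc (star u ^ (l + m) * u ^ (l + m)) * (star u ^ l * u ^ l)
      = star u ^ (l + m) * (u ^ m * (u ^ l * star u ^ l * u ^ l)) := by
        simp only [add_comm l m, pow_add, mul_assoc]
    _ = star u ^ (l + m) * u ^ (l + m) := by rw [hl, ← pow_add, add_comm m l]

lemma initialProj_mul_initialProj (hk : u ^ k * star u ^ k * u ^ k = u ^ k)
    (hl : u ^ l * star u ^ l * u ^ l = u ^ l) :
    (star u ^ k * u ^ k) * (star u ^ l * u ^ l) = star u ^ max k l * u ^ max k l := by
  rcases le_total k l with hkl | hlk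
  · rw [max_eq_right hkl, initialProj_mul_initialProj_of_le hk hkl]
  · rw [max_eq_left hlk, initialProj_mul_initialProj_of_ge hl hlk]

lemma finalProj_mul_finalProj (hk : u ^ k * star u ^ k * u ^ k = u ^ k)
    (hl : u ^ l * star u ^ l * u ^ l = u ^ l) :
    (u ^ k * star u ^ k) * (u ^ l * star u ^ l) = u ^ max k l * star u ^ max k l := by
  simpa only [star_star] using initialProj_mul_initialProj (u := star u)
    (by rw [star_star]; exact star_pow_mul_pow_mul_star_pow hk)
    (by rw [star_star]; exact star_pow_mul_pow_mul_star_pow hl)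

end PowerPartialIsometry

/-- For a power partial isometry `u` with `p_k = u*ᵏ uᵏ` and `q_l = uˡ u*ˡ`,
one has `p_k p_l = p_{max(k,l)}` and `q_k q_l = q_{max(k,l)}`. -/
theorem stmt_10 {H : Type*} [NormedAddCommGroup H] [InnerProductSpace ℂ H] [CompleteSpace H]
    (u : H →L[ℂ] H)
    (hpow : ∀ k : ℕ, 1 ≤ k → u ^ k * (star u) ^ k * u ^ k = u ^ k) :
    ∀ k l : ℕ, 1 ≤ k → 1 ≤ l →
      ((star u) ^ k * u ^ k) * ((star u) ^ l * u ^ l) = (star u) ^ max k l * u ^ max k l ∧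
      (u ^ k * (star u) ^ k) * (u ^ l * (star u) ^ l) = u ^ max k l * (star u) ^ max k l :=
  fun k l hk hl =>
    ⟨PowerPartialIsometry.initialProj_mul_initialProj (hpow k hk) (hpow l hl),
      PowerPartialIsometry.finalProj_mul_finalProj (hpow k hk) (hpow l hl)⟩
end

section
/- Let u be a power partial isometry on a Hilbert space. Then for all k, l ≥ 1 the projections p_k = u*^k u^k and q_l = u^l u*^l commute: p_k q_l = q_l p_k. -/
/-!
If `p` and `q` are projections in a C⋆-algebra whose product `pq` is idempotent, then
`x = pq - qpq` satisfies `x⋆x = 0`, so `pq = qpq` is self-adjoint and hence `pq = (pq)⋆ = qp`.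
For partial isometries `a`, `b` with `ab` a partial isometry, `(a⋆a)(bb⋆)` is idempotent, since
`(a⋆a bb⋆)² = a⋆ (ab (ab)⋆ ab) b⋆`; so the initial projection of `a` commutes with the final
projection of `b`. Apply this to `a = uᵏ`, `b = uˡ`, with `ab = uᵏ⁺ˡ`.
-/

theorem IsStarProjection.commute_of_isIdempotentElem_mul {A : Type*} [NonUnitalNormedRing A]
    [StarRing A] [CStarRing A] {p q : A} (hp : IsStarProjection p) (hq : IsStarProjection q)
    (hpq : IsIdempotentElem (p * q)) : Commute p q := by
  have hx : star (p * q - q * p * q) * (p * q - q * p * q) = 0 :=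
    calc star (p * q - q * p * q) * (p * q - q * p * q)
        = q * (p * p) * q - q * (p * q * (p * q)) - q * (p * q * (p * q))
            + q * (p * (q * q) * (p * q)) := by
          simp only [star_sub, star_mul, hp.isSelfAdjoint.star_eq, hq.isSelfAdjoint.star_eq]
          noncomm_ring
      _ = 0 := by
          rw [hp.isIdempotentElem.eq, hq.isIdempotentElem.eq, hpq.eq]
          noncomm_ring
  have hpq_eq : p * q = q * p * q := sub_eq_zero.mp ((CStarRing.star_mul_self_eq_zero_iff _).mp hx)
  have hsa : IsSelfAdjoint (p * q) := by
    rw [hpq_eq]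
    simpa only [hq.isSelfAdjoint.star_eq] using hp.isSelfAdjoint.conjugate q
  exact (IsSelfAdjoint.commute_iff hp.isSelfAdjoint hq.isSelfAdjoint).mpr hsa

def IsPartialIsometry {R : Type*} [Mul R] [Star R] (a : R) : Prop :=
  a * star a * a = a

namespace IsPartialIsometry

variable {R : Type*} [Semigroup R] [StarMul R] {a b : R}

theorem isStarProjection_star_mul_self (ha : IsPartialIsometry a) :
    IsStarProjection (star a * a) where
  isIdempotentElem :=
    calc star a * a * (star a * a) = star a * (a * star a * a) := by simp only [mul_assoc]
      _ = star a * a := by rw [ha]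
  isSelfAdjoint := .star_mul_self a

theorem isStarProjection_mul_star_self (ha : IsPartialIsometry a) :
    IsStarProjection (a * star a) where
  isIdempotentElem :=
    calc a * star a * (a * star a) = (a * star a * a) * star a := by simp only [mul_assoc]
      _ = a * star a := by rw [ha]
  isSelfAdjoint := .mul_star_self a

theorem isIdempotentElem_star_mul_self_mul_mul_star_self (hab : IsPartialIsometry (a * b)) :
    IsIdempotentElem (star a * a * (b * star b)) :=
  calc star a * a * (b * star b) * (star a * a * (b * star b))
      = star a * (a * b * star (a * b) * (a * b)) * star b := by simp only [star_mul, mul_assoc]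
    _ = star a * a * (b * star b) := by rw [hab]; simp only [mul_assoc]

end IsPartialIsometry

theorem IsPartialIsometry.commute_star_mul_self_mul_star_self {A : Type*}
    [NonUnitalNormedRing A] [StarRing A] [CStarRing A] {a b : A} (ha : IsPartialIsometry a)
    (hb : IsPartialIsometry b) (hab : IsPartialIsometry (a * b)) :
    Commute (star a * a) (b * star b) :=
  ha.isStarProjection_star_mul_self.commute_of_isIdempotentElem_mul
    hb.isStarProjection_mul_star_self hab.isIdempotentElem_star_mul_self_mul_mul_star_self

/-- For a power partial isometry `u`, the projections `p_k = u*ᵏ uᵏ` and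
`q_l = uˡ u*ˡ` commute for all `k, l ≥ 1`. -/
theorem stmt_11 {H : Type*} [NormedAddCommGroup H] [InnerProductSpace ℂ H] [CompleteSpace H]
    (u : H →L[ℂ] H)
    (hpow : ∀ k : ℕ, 1 ≤ k → u ^ k * (star u) ^ k * u ^ k = u ^ k) :
    ∀ k l : ℕ, 1 ≤ k → 1 ≤ l →
      ((star u) ^ k * u ^ k) * (u ^ l * (star u) ^ l) =
        (u ^ l * (star u) ^ l) * ((star u) ^ k * u ^ k) := by
  have hpi (n : ℕ) (hn : 1 ≤ n) : IsPartialIsometry (u ^ n) := by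
    rw [IsPartialIsometry, star_pow]
    exact hpow n hn
  intro k l hk hl
  have hkl : IsPartialIsometry (u ^ k * u ^ l) := pow_add u k l ▸ hpi (k + l) (by omega)
  simpa only [star_pow] using
    ((hpi k hk).commute_star_mul_self_mul_star_self (hpi l hl) hkl).eq
end
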